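/- arXiv:2403.16077 — 3 statements merged into one kernel-verified Lean document; each statement's English description precedes it below -/
import Mathlib

section
/- Let W : [0,∞) → (0,∞) be measurable with x ↦ e^{-φ x}W(x) log-concave and increasing to the finite limit 1/ψ'(φ) as x → ∞, where φ := Φ(q) and let Φ(q+r) > Φ(q). Define h(u) := ∫₀^∞ e^{-(Φ(q+r)-Φ(q)) z} · W_{Φ(q)}(z+u)/W_{Φ(q)}(u) dz for u > 0, where W_{Φ(q)}(x) = e^{-Φ(q)x}W(x). Then h is non-increasing on (0,∞) and lim_{u→∞} h(u) = 1/(Φ(q+r) − Φ(q)). -/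
open Real MeasureTheory Set Filter

/-- Lemma 2.1 of the paper: with `W_{Φ(q)}(x) = e^{-Φ(q)x} W(x)` log-concave on `(0,∞)`,
monotone on `[0,∞)` and increasing to a finite positive limit `L = 1/ψ'(Φ(q))`, the
function `h(u) = ∫₀^∞ e^{-(Φ(q+r)-Φ(q))z} W_{Φ(q)}(z+u)/W_{Φ(q)}(u) dz` is
non-increasing on `(0,∞)` and tends to `1/(Φ(q+r) − Φ(q))` as `u → ∞`. -/
theorem statement1 (W : ℝ → ℝ) (φq φqr L : ℝ)
    (hφq : 0 < φq) (hφ : φq < φqr) (hL : 0 < L)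
    (hWpos : ∀ x ≥ (0 : ℝ), 0 < W x)
    (hWmeas : Measurable W)
    (hlc : ConcaveOn ℝ (Set.Ioi 0) (fun x => Real.log (Real.exp (-φq * x) * W x)))
    (hmono : MonotoneOn (fun x => Real.exp (-φq * x) * W x) (Set.Ici 0))
    (hlim : Tendsto (fun x => Real.exp (-φq * x) * W x) atTop (nhds L))
    (h : ℝ → ℝ)
    (hdef : ∀ u, h u =
      ∫ z in Set.Ioi (0 : ℝ),
        Real.exp (-(φqr - φq) * z) *
          ((Real.exp (-φq * (z + u)) * W (z + u)) / (Real.exp (-φq * u) * W u))) :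
    AntitoneOn h (Set.Ioi 0) ∧ Tendsto h atTop (nhds (1 / (φqr - φq))) := by
  set α : ℝ := φqr - φq with hα_def
  have hα : 0 < α := by simp [hα_def]; linarith
  set Wφ : ℝ → ℝ := fun x => Real.exp (-φq * x) * W x with hWφ_def
  have hWφpos : ∀ x ≥ (0:ℝ), 0 < Wφ x := fun x hx =>
    mul_pos (Real.exp_pos _) (hWpos x hx)
  have hWφle : ∀ x ≥ (0:ℝ), Wφ x ≤ L := by
    intro x hx
    refine ge_of_tendsto hlim ?_
    filter_upwards [eventually_ge_atTop x] with y hy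
    exact hmono hx (hx.trans hy) hy
  have hWφmeas : Measurable Wφ := by
    exact (Real.measurable_exp.comp (measurable_const.mul measurable_id)).mul hWmeas
  -- the key log-concavity inequality
  have key : ∀ z > (0:ℝ), ∀ u v : ℝ, 0 < u → u ≤ v →
      Wφ (z + v) / Wφ v ≤ Wφ (z + u) / Wφ u := by
    intro z hz u v hu huv
    rcases eq_or_lt_of_le huv with rfl | huv
    · exact le_rfl
    have hv : 0 < v := hu.trans huv
    set f : ℝ → ℝ := fun x => Real.log (Wφ x) with hf_def
    have hconv : ConvexOn ℝ (Set.Ioi 0) (fun x => -f x) := hlc.neg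
    have hzu : (0:ℝ) < u + z := by linarith
    have hzv : (0:ℝ) < v + z := by linarith
    have h1 := hconv.secant_mono (a := u) (x := u + z) (y := v + z)
      (Set.mem_Ioi.2 hu) (Set.mem_Ioi.2 hzu) (Set.mem_Ioi.2 hzv)
      (by intro hh; nlinarith [hh]) (by intro hh; nlinarith [hh]) (by linarith)
    have h2 := hconv.secant_mono (a := v + z) (x := u) (y := v)
      (Set.mem_Ioi.2 hzv) (Set.mem_Ioi.2 hu) (Set.mem_Ioi.2 hv)
      (by intro hh; nlinarith [hh]) (by intro hh; nlinarith [hh]) huv.le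
    -- deduce f(u+z) - f u ≥ f(v+z) - f v
    have hineq : f (v + z) - f v ≤ f (u + z) - f u := by
      have e1 : (-f (u + z) - -f u) / ((u + z) - u) ≤ (-f (v + z) - -f u) / ((v + z) - u) := h1
      have e2 : (-f u - -f (v + z)) / (u - (v + z)) ≤ (-f v - -f (v + z)) / (v - (v + z)) := h2
      have hz' : (u + z) - u = z := by ring
      have hvu : (0:ℝ) < (v + z) - u := by linarith
      rw [hz'] at e1
      have e2' : (-f (v + z) - -f u) / ((v + z) - u) ≤ (-f (v + z) - -f v) / z := by
        have : (-f u - -f (v + z)) / (u - (v + z)) = (-f (v + z) - -f u) / ((v + z) - u) := by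
          rw [← neg_div_neg_eq]; ring_nf
        rw [this] at e2
        have : (-f v - -f (v + z)) / (v - (v + z)) = (-f (v + z) - -f v) / z := by
          rw [← neg_div_neg_eq]; ring_nf
        rw [this] at e2
        exact e2
      have := e1.trans e2'
      have := (div_le_div_iff_of_pos_right hz).1 this
      linarith
    -- exponentiate
    have hratio : Real.log (Wφ (z + v) / Wφ v) ≤ Real.log (Wφ (z + u) / Wφ u) := by
      rw [Real.log_div (hWφpos _ (by linarith)).ne' (hWφpos _ hv.le).ne',
        Real.log_div (hWφpos _ (by linarith)).ne' (hWφpos _ hu.le).ne']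
      have e1 : z + v = v + z := by ring
      have e2 : z + u = u + z := by ring
      rw [e1, e2]
      exact hineq
    have hpos1 : 0 < Wφ (z + v) / Wφ v :=
      div_pos (hWφpos _ (by linarith)) (hWφpos _ hv.le)
    have hpos2 : 0 < Wφ (z + u) / Wφ u :=
      div_pos (hWφpos _ (by linarith)) (hWφpos _ hu.le)
    exact (Real.log_le_log_iff hpos1 hpos2).1 hratio
  -- measurability of the integrand
  have hFmeas : ∀ u : ℝ, AEStronglyMeasurable
      (fun z => Real.exp (-α * z) * (Wφ (z + u) / Wφ u))
      (volume.restrict (Set.Ioi 0)) := by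
    intro u
    refine Measurable.aestronglyMeasurable ?_
    exact ((Real.measurable_exp.comp (measurable_const.mul measurable_id)).mul
      ((hWφmeas.comp (measurable_id.add_const u)).div_const _))
  -- integrability of the integrand for u > 0
  have hFint : ∀ u > (0:ℝ), IntegrableOn
      (fun z => Real.exp (-α * z) * (Wφ (z + u) / Wφ u)) (Set.Ioi 0) := by
    intro u hu
    refine Integrable.mono' ((exp_neg_integrableOn_Ioi 0 hα).mul_const (L / Wφ u))
      (hFmeas u) ?_
    rw [ae_restrict_iff' measurableSet_Ioi]
    filter_upwards with z hz
    have hz' : (0:ℝ) < z := hz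
    have hnn : 0 ≤ Real.exp (-α * z) * (Wφ (z + u) / Wφ u) := by
      have := hWφpos (z + u) (by linarith)
      have := hWφpos u hu.le
      positivity
    rw [Real.norm_of_nonneg hnn]
    have hr : Wφ (z + u) / Wφ u ≤ L / Wφ u :=
      div_le_div₀ hL.le (hWφle _ (by linarith)) (hWφpos u hu.le) le_rfl
    exact mul_le_mul_of_nonneg_left hr (Real.exp_pos _).le
  have hrw : ∀ u, h u = ∫ z in Set.Ioi (0:ℝ),
      Real.exp (-α * z) * (Wφ (z + u) / Wφ u) := hdef
  constructor
  · -- antitone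
    intro u hu v hv huv
    rw [hrw, hrw]
    refine setIntegral_mono_on (hFint v hv) (hFint u hu) measurableSet_Ioi ?_
    intro z hz
    exact mul_le_mul_of_nonneg_left (key z hz u v hu huv) (Real.exp_pos _).le
  · -- limit
    have hfun : h = fun u => ∫ z in Set.Ioi (0:ℝ),
        Real.exp (-α * z) * (Wφ (z + u) / Wφ u) := funext hrw
    rw [hfun]
    have hint_exp : (∫ z in Set.Ioi (0:ℝ), Real.exp (-α * z)) = 1 / α := by
      have : (fun z : ℝ => Real.exp (-α * z)) = fun z => (fun x => Real.exp (-x)) (α * z) := by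
        funext z; simp [neg_mul]
      rw [this, integral_comp_mul_left_Ioi (fun x => Real.exp (-x)) 0 hα]
      simp [Real.exp_zero, integral_exp_neg_Ioi, one_div, integral_exp_Iic_zero]
    have := tendsto_integral_filter_of_dominated_convergence
      (μ := volume.restrict (Set.Ioi (0:ℝ))) (l := atTop)
      (F := fun u z => Real.exp (-α * z) * (Wφ (z + u) / Wφ u))
      (f := fun z => Real.exp (-α * z))
      (bound := fun z => Real.exp (-α * z) * (L / Wφ 1))
      (Eventually.of_forall hFmeas)
      (by
        filter_upwards [eventually_ge_atTop (1:ℝ)] with u hu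
        rw [ae_restrict_iff' measurableSet_Ioi]
        filter_upwards with z hz
        have hz' : (0:ℝ) < z := hz
        have hnn : 0 ≤ Real.exp (-α * z) * (Wφ (z + u) / Wφ u) := by
          have := hWφpos (z + u) (by linarith)
          have := hWφpos u (by linarith)
          positivity
        rw [Real.norm_of_nonneg hnn]
        have hr : Wφ (z + u) / Wφ u ≤ L / Wφ 1 :=
          div_le_div₀ hL.le (hWφle _ (by linarith)) (hWφpos 1 one_pos.le)
            (hmono (by norm_num : (1:ℝ) ∈ Set.Ici (0:ℝ)) (Set.mem_Ici.2 (by linarith)) hu)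
        exact mul_le_mul_of_nonneg_left hr (Real.exp_pos _).le)
      ((exp_neg_integrableOn_Ioi 0 hα).mul_const (L / Wφ 1))
      (by
        filter_upwards with z
        have h1 : Tendsto (fun u : ℝ => Wφ (z + u)) atTop (nhds L) :=
          hlim.comp (tendsto_atTop_add_const_left atTop z tendsto_id)
        have h2 : Tendsto (fun u : ℝ => Wφ (z + u) / Wφ u) atTop (nhds (L / L)) :=
          h1.div hlim hL.ne'
        rw [div_self hL.ne'] at h2
        simpa using (h2.const_mul (Real.exp (-α * z))))
    rw [hint_exp] at this
    exact this
end

section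
/- Let W : (0,∞) → (0,∞) be differentiable with W' > 0 and W/W' non-decreasing, and let W̄(x) := ∫₀^x W(y)dy for x ≥ 0 (with W̄ = 0 on (-∞,0]). Then for each fixed b ≥ 0, the map x ↦ W̄(x−b)/W(x) is non-decreasing on (b,∞). -/
open Real MeasureTheory Set Filter

open scoped Topology

/-! For `y > 0` and `c = W y / W' y`, the function `c W - W̄` has derivative `c W' - W ≥ 0` on
`(0, y]`, because `W / W'` is non-decreasing; since `W̄ (0+) = 0` and `W > 0` this gives
`W̄ y ≤ (W y / W' y) W y`. At `y = x - b`, monotonicity of `W / W'` once more yields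
`W̄ (x - b) W' x ≤ W (x - b) W x`, which is the sign of the derivative of `W̄ (x - b) / W x`. -/

lemma monotoneOn_of_hasDerivAt_nonneg {D : Set ℝ} (hD : Convex ℝ D) {f f' : ℝ → ℝ}
    (hf : ∀ x ∈ D, HasDerivAt f (f' x) x) (hf' : ∀ x ∈ interior D, 0 ≤ f' x) :
    MonotoneOn f D :=
  monotoneOn_of_hasDerivWithinAt_nonneg hD
    (fun x hx => (hf x hx).continuousAt.continuousWithinAt)
    (fun x hx => (hf x (interior_subset hx)).hasDerivWithinAt) hf'

lemma integrableOn_Ioc_of_monotoneOn_of_nonneg {f : ℝ → ℝ} {a b : ℝ}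
    (hcont : ContinuousOn f (Ioc a b)) (hmono : MonotoneOn f (Ioc a b))
    (hnonneg : ∀ x ∈ Ioc a b, 0 ≤ f x) : IntegrableOn f (Ioc a b) := by
  refine ⟨hcont.aestronglyMeasurable measurableSet_Ioc,
    .restrict_of_bounded (C := f b) (by simp) ?_⟩
  filter_upwards [ae_restrict_mem measurableSet_Ioc] with x hx
  rw [Real.norm_eq_abs, abs_of_nonneg (hnonneg x hx)]
  exact hmono hx (right_mem_Ioc.2 (hx.1.trans_le hx.2)) hx.2

section

variable {W W' : ℝ → ℝ}

lemma monotoneOn_Ioi_of_hasDerivAt_pos (hderiv : ∀ x > (0 : ℝ), HasDerivAt W (W' x) x)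
    (hW'pos : ∀ x > (0 : ℝ), 0 < W' x) : MonotoneOn W (Ioi 0) :=
  monotoneOn_of_hasDerivAt_nonneg (convex_Ioi 0) hderiv fun x hx =>
    (hW'pos x (interior_subset hx)).le

lemma intervalIntegrable_zero_of_hasDerivAt_pos (hderiv : ∀ x > (0 : ℝ), HasDerivAt W (W' x) x)
    (hWpos : ∀ x > (0 : ℝ), 0 < W x) (hW'pos : ∀ x > (0 : ℝ), 0 < W' x) {y : ℝ} (hy : 0 < y) :
    IntervalIntegrable W volume 0 y :=
  (intervalIntegrable_iff_integrableOn_Ioc_of_le hy.le).2 <|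
    integrableOn_Ioc_of_monotoneOn_of_nonneg
      (fun x hx => (hderiv x hx.1).continuousAt.continuousWithinAt)
      ((monotoneOn_Ioi_of_hasDerivAt_pos hderiv hW'pos).mono Ioc_subset_Ioi_self)
      (fun x hx => (hWpos x hx.1).le)

lemma hasDerivAt_integral_zero_of_hasDerivAt_pos
    (hderiv : ∀ x > (0 : ℝ), HasDerivAt W (W' x) x)
    (hWpos : ∀ x > (0 : ℝ), 0 < W x) (hW'pos : ∀ x > (0 : ℝ), 0 < W' x) {y : ℝ} (hy : 0 < y) :
    HasDerivAt (fun u => ∫ t in (0 : ℝ)..u, W t) (W y) y :=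
  intervalIntegral.integral_hasDerivAt_right
    (intervalIntegrable_zero_of_hasDerivAt_pos hderiv hWpos hW'pos hy)
    ((continuousOn_of_forall_continuousAt fun x hx => (hderiv x hx).continuousAt)
      |>.stronglyMeasurableAtFilter isOpen_Ioi y hy)
    (hderiv y hy).continuousAt

lemma tendsto_integral_zero_nhdsGT (hderiv : ∀ x > (0 : ℝ), HasDerivAt W (W' x) x)
    (hWpos : ∀ x > (0 : ℝ), 0 < W x) (hW'pos : ∀ x > (0 : ℝ), 0 < W' x) :
    Tendsto (fun u => ∫ t in (0 : ℝ)..u, W t) (𝓝[>] 0) (𝓝 0) := by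
  have hcont := intervalIntegral.continuousWithinAt_primitive (b₀ := 0) (b₁ := 0) (b₂ := 1)
    (a := 0) (μ := volume) (by simp)
    (by simpa using intervalIntegrable_zero_of_hasDerivAt_pos hderiv hWpos hW'pos one_pos)
  simpa using (hcont.mono_of_mem_nhdsWithin (Icc_mem_nhdsGT one_pos)).tendsto

lemma integral_le_div_mul (hderiv : ∀ x > (0 : ℝ), HasDerivAt W (W' x) x)
    (hWpos : ∀ x > (0 : ℝ), 0 < W x) (hW'pos : ∀ x > (0 : ℝ), 0 < W' x)
    (hratio : MonotoneOn (fun x => W x / W' x) (Ioi 0)) {y : ℝ} (hy : 0 < y) :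
    ∫ t in (0 : ℝ)..y, W t ≤ W y / W' y * W y := by
  set c := W y / W' y
  set F : ℝ → ℝ := fun s => c * W s - ∫ t in (0 : ℝ)..s, W t
  have hF : MonotoneOn F (Ioc 0 y) := by
    refine monotoneOn_of_hasDerivAt_nonneg (convex_Ioc 0 y) (f' := fun s => c * W' s - W s)
      (fun s hs => ((hderiv s hs.1).const_mul c).sub
        (hasDerivAt_integral_zero_of_hasDerivAt_pos hderiv hWpos hW'pos hs.1)) ?_
    rw [interior_Ioc]
    intro s hs
    have hWs : W s / W' s ≤ c := hratio hs.1 hy hs.2.le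
    rw [div_le_iff₀ (hW'pos s hs.1)] at hWs
    linarith
  have hFy : 0 ≤ F y := by
    have hlim : Tendsto (fun t => -∫ s in (0 : ℝ)..t, W s) (𝓝[>] 0) (𝓝 0) := by
      simpa using (tendsto_integral_zero_nhdsGT hderiv hWpos hW'pos).neg
    refine le_of_tendsto hlim ?_
    filter_upwards [Ioc_mem_nhdsGT hy] with t ht
    have hFt : F t ≤ F y := hF ht (right_mem_Ioc.2 hy) ht.2
    have hcW : 0 < c * W t := mul_pos (div_pos (hWpos y hy) (hW'pos y hy)) (hWpos t ht.1)
    simp only [F] at hFt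
    linarith
  simp only [F] at hFy
  linarith

lemma integral_sub_mul_deriv_le (hderiv : ∀ x > (0 : ℝ), HasDerivAt W (W' x) x)
    (hWpos : ∀ x > (0 : ℝ), 0 < W x) (hW'pos : ∀ x > (0 : ℝ), 0 < W' x)
    (hratio : MonotoneOn (fun x => W x / W' x) (Ioi 0)) {b x : ℝ} (hb : 0 ≤ b) (hx : b < x) :
    (∫ t in (0 : ℝ)..(x - b), W t) * W' x ≤ W (x - b) * W x := by
  have hxb : 0 < x - b := sub_pos.2 hx
  have hx0 : 0 < x := hb.trans_lt hx
  have hle : ∫ t in (0 : ℝ)..(x - b), W t ≤ W x / W' x * W (x - b) :=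
    calc ∫ t in (0 : ℝ)..(x - b), W t
        ≤ W (x - b) / W' (x - b) * W (x - b) := integral_le_div_mul hderiv hWpos hW'pos hratio hxb
      _ ≤ W x / W' x * W (x - b) :=
        mul_le_mul_of_nonneg_right (hratio hxb hx0 (sub_le_self x hb)) (hWpos _ hxb).le
  calc (∫ t in (0 : ℝ)..(x - b), W t) * W' x ≤ W x / W' x * W (x - b) * W' x := by
        gcongr; exact (hW'pos x hx0).le
    _ = W (x - b) * W x := by field_simp [(hW'pos x hx0).ne']

end

/-- Monotonicity of `h̄₄` (Lemma 6.5): if `W` is differentiable on `(0,∞)` with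
`W, W' > 0` and `W/W'` non-decreasing, and `W̄(x) = ∫₀^x W`, then for each `b ≥ 0`
the map `x ↦ W̄(x−b)/W(x)` is non-decreasing on `(b,∞)`. -/
theorem statement9 (W W' : ℝ → ℝ)
    (hderiv : ∀ x > (0 : ℝ), HasDerivAt W (W' x) x)
    (hWpos : ∀ x > (0 : ℝ), 0 < W x)
    (hW'pos : ∀ x > (0 : ℝ), 0 < W' x)
    (hratio : MonotoneOn (fun x => W x / W' x) (Set.Ioi 0)) :
    ∀ b ≥ (0 : ℝ),
      MonotoneOn (fun x => (∫ t in (0 : ℝ)..(x - b), W t) / W x) (Set.Ioi b) := by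
  intro b hb
  refine monotoneOn_of_hasDerivAt_nonneg (convex_Ioi b)
    (f' := fun x => (W (x - b) * W x - (∫ t in (0 : ℝ)..(x - b), W t) * W' x) / W x ^ 2)
    (fun x hx => ?_) (fun x hx => ?_)
  · have hx0 : 0 < x := hb.trans_lt hx
    have hnum := (hasDerivAt_integral_zero_of_hasDerivAt_pos hderiv hWpos hW'pos
      (sub_pos.2 hx)).comp_sub_const x b
    exact hnum.div (hderiv x hx0) (hWpos x hx0).ne'
  · rw [interior_Ioi] at hx
    exact div_nonneg (sub_nonneg.2 (integral_sub_mul_deriv_le hderiv hWpos hW'pos hratio hb hx))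
      (sq_nonneg _)
end

section
/- Let q > 0 and let H^{(q,r)}(u) := Z^{(q)}(u) − q·(Z^{(q)}(u,Φ(q+r))/∂_u Z^{(q)}(u,Φ(q+r)))·W^{(q)}(u) and H₁(u) := Z^{(q)}(u) − q W^{(q)}(u)²/W^{(q)'}(u), where ∂_u Z^{(q)}(u,Φ(q+r)) = Φ(q+r)Z^{(q)}(u,Φ(q+r)) − rW^{(q)}(u) > 0. Suppose h(u) := Z^{(q)}(u,Φ(q+r))/(rW^{(q)}(u)) satisfies h'(u) < 0 for all u > 0. Then H^{(q,r)}(u) < H₁(u) for all u > 0. -/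
open Real MeasureTheory Set Filter

/-- Lemma 4.3 (second part): if `h(u) = Z^{(q)}(u,Φ(q+r))/(rW^{(q)}(u))` is strictly
decreasing (in the sense `deriv h < 0` on `(0,∞)`), then
`H^{(q,r)}(u) = Z(u) − q (Z^{(q)}(u,Φ(q+r))/∂ᵤZ^{(q)}(u,Φ(q+r))) W(u)` satisfies
`H^{(q,r)}(u) < H₁(u) = Z(u) − qW(u)²/W'(u)` for all `u > 0`, where
`∂ᵤZ^{(q)}(u,Φ(q+r)) = Φ(q+r)Z^{(q)}(u,Φ(q+r)) − rW(u) > 0`. -/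
theorem statement17 (q r Φqr : ℝ) (hq : 0 < q) (hr : 0 < r) (hΦ : 0 < Φqr)
    (W W' Zθ Z : ℝ → ℝ)
    (hWd : ∀ u > (0 : ℝ), HasDerivAt W (W' u) u)
    (hWpos : ∀ u > (0 : ℝ), 0 < W u)
    (hW'pos : ∀ u > (0 : ℝ), 0 < W' u)
    (hZθpos : ∀ u > (0 : ℝ), 0 < Zθ u)
    (hZθd : ∀ u > (0 : ℝ), HasDerivAt Zθ (Φqr * Zθ u - r * W u) u)
    (hZθd_pos : ∀ u > (0 : ℝ), 0 < Φqr * Zθ u - r * W u)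
    (hZ : ∀ x, Z x = 1 + q * ∫ t in (0 : ℝ)..x, W t)
    (hdec : ∀ u > (0 : ℝ), deriv (fun u => Zθ u / (r * W u)) u < 0) :
    ∀ u > (0 : ℝ),
      Z u - q * (Zθ u / (Φqr * Zθ u - r * W u)) * W u
        < Z u - q * (W u) ^ 2 / W' u := by
  intro u hu
  have hW := hWpos u hu
  have hW' := hW'pos u hu
  have hD := hZθd_pos u hu
  have hZθ := hZθpos u hu
  have hrW : 0 < r * W u := by positivity
  -- compute the derivative of h
  have hder : HasDerivAt (fun u => Zθ u / (r * W u))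
      (((Φqr * Zθ u - r * W u) * (r * W u) - Zθ u * (r * W' u)) / (r * W u) ^ 2) u := by
    exact (hZθd u hu).div ((hWd u hu).const_mul r) (ne_of_gt hrW)
  have hnum : ((Φqr * Zθ u - r * W u) * (r * W u) - Zθ u * (r * W' u)) / (r * W u) ^ 2 < 0 := by
    have := hdec u hu
    rwa [hder.deriv] at this
  have hkey : (Φqr * Zθ u - r * W u) * W u < Zθ u * W' u := by
    have h1 : (Φqr * Zθ u - r * W u) * (r * W u) - Zθ u * (r * W' u) < 0 := by
      have hsq : (0:ℝ) < (r * W u) ^ 2 := by positivity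
      by_contra h
      exact absurd (div_nonneg (not_lt.mp h) hsq.le) (not_le.mpr hnum)
    nlinarith
  have h2 : q * (Zθ u / (Φqr * Zθ u - r * W u)) * W u
      = q * Zθ u * W u / (Φqr * Zθ u - r * W u) := by ring
  have hmain : q * (W u) ^ 2 / W' u < q * (Zθ u / (Φqr * Zθ u - r * W u)) * W u := by
    rw [h2, div_lt_div_iff₀ hW' hD]
    nlinarith [mul_lt_mul_of_pos_left hkey (mul_pos hq hW)]
  linarith
end
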